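/- arXiv:2506.21203 — 6 statements merged into one kernel-verified Lean document; each statement's English description precedes it below -/
import Mathlib

section
/- If there exist flat expansions f₁ ∈ Ξ(m₁) and f₂ ∈ Ξ(m₂) of two condensed solution mappings m₁ and m₂ that are flat-compatible, then m₁ and m₂ are condensed-compatible. -/
/-- A binding of a variable in a condensed solution mapping: it is bound either
in the value component (`nu`, to a term), the identifier component (`iota`, to a
term identifier), the condensed component (`zeta`, to a pair of a graph-name
identifier and a set of versions), or the unbound-graph component (`psi`).
A condensed solution mapping `Var → Option (Binding Term V)` is thereby exactly
a quadruple of partial functions with pairwise disjoint domains. -/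
inductive Binding (Term V : Type*) where
  | nu (t : Term)
  | iota (n : ℕ)
  | zeta (n : ℕ) (Vs : Set V)
  | psi

/-- The value set of a binding: a singleton `{t}` for a ν-binding, the singleton
`{idtoval n}` for an ι-binding, the set of versioned IRIs `vis (v, idtoval n)`
for `v` in the version set for a ζ-binding, and the set of all versioned IRIs
`vis (v, g)` with `g ∈ NG` for a ψ-binding. -/
def bvals {Term V : Type*} (idtoval : ℕ → Term) (vis : V × Term → Term)
    (NG : Set Term) : Binding Term V → Set Term
  | .nu t => {t}
  | .iota n => {idtoval n}
  | .zeta n Vs => {t | ∃ v ∈ Vs, t = vis (v, idtoval n)}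
  | .psi => {t | ∃ v, ∃ g ∈ NG, t = vis (v, g)}

/-- The value set `vals_m(x)` of a variable under a condensed solution mapping. -/
def valsM {Var Term V : Type*} (idtoval : ℕ → Term) (vis : V × Term → Term)
    (NG : Set Term) (m : Var → Option (Binding Term V)) (x : Var) : Set Term :=
  match m x with
  | none => ∅
  | some b => bvals idtoval vis NG b

/-- The domain of a (condensed or flat) partial mapping. -/
def domM {Var β : Type*} (m : Var → Option β) : Set Var := {x | m x ≠ none}

/-- The flat expansion `Ξ(m)` of a condensed solution mapping `m`: the set of
partial functions `f : Var ⇀ Term` with the same domain as `m` and with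
`f x ∈ vals_m(x)` for every `x` in that domain. -/
def Xi {Var Term V : Type*} (idtoval : ℕ → Term) (vis : V × Term → Term)
    (NG : Set Term) (m : Var → Option (Binding Term V)) :
    Set (Var → Option Term) :=
  {f | (∀ x, m x = none → f x = none) ∧
       (∀ x b, m x = some b → ∃ t, f x = some t ∧ t ∈ bvals idtoval vis NG b)}

/-- Two flat mappings are flat-compatible if they agree on every variable in
the intersection of their domains. -/
def FlatCompat {Var Term : Type*} (f₁ f₂ : Var → Option Term) : Prop :=
  ∀ x t₁ t₂, f₁ x = some t₁ → f₂ x = some t₂ → t₁ = t₂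

/-- Two condensed solution mappings are condensed-compatible if: their ν-components
agree on shared ν-variables, their ι-components agree on shared ι-variables, and
on shared ζ-variables the graph-name identifiers coincide and the version sets
intersect. -/
def CondCompat {Var Term V : Type*} (m₁ m₂ : Var → Option (Binding Term V)) : Prop :=
  (∀ x t₁ t₂, m₁ x = some (.nu t₁) → m₂ x = some (.nu t₂) → t₁ = t₂) ∧
  (∀ x n₁ n₂, m₁ x = some (.iota n₁) → m₂ x = some (.iota n₂) → n₁ = n₂) ∧
  (∀ x n₁ V₁ n₂ V₂, m₁ x = some (.zeta n₁ V₁) → m₂ x = some (.zeta n₂ V₂) →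
    n₁ = n₂ ∧ (V₁ ∩ V₂).Nonempty)

/-- Two bindings are in the same representation component. -/
def SameRep {Term V : Type*} : Binding Term V → Binding Term V → Prop
  | .nu _, .nu _ => True
  | .iota _, .iota _ => True
  | .zeta _ _, .zeta _ _ => True
  | .psi, .psi => True
  | _, _ => False

/-- If two condensed solution mappings admit flat-compatible flat expansions,
then they are condensed-compatible. -/
theorem condCompat_of_flatCompat {Var Term V : Type*}
    (idtoval : ℕ → Term) (vis : V × Term → Term) (NG : Set Term)
    (hid : Function.Injective idtoval) (hvis : Function.Injective vis)
    (m₁ m₂ : Var → Option (Binding Term V)) (f₁ f₂ : Var → Option Term)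
    (hf₁ : f₁ ∈ Xi idtoval vis NG m₁) (hf₂ : f₂ ∈ Xi idtoval vis NG m₂)
    (hcompat : FlatCompat f₁ f₂) :
    CondCompat m₁ m₂ := by
  obtain ⟨-, h₁⟩ := hf₁
  obtain ⟨-, h₂⟩ := hf₂
  refine ⟨?_, ?_, ?_⟩
  · intro x t₁ t₂ hm₁ hm₂
    obtain ⟨s₁, hs₁, hv₁⟩ := h₁ x _ hm₁
    obtain ⟨s₂, hs₂, hv₂⟩ := h₂ x _ hm₂
    simp only [bvals, Set.mem_singleton_iff] at hv₁ hv₂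
    subst hv₁ hv₂
    exact hcompat x _ _ hs₁ hs₂
  · intro x n₁ n₂ hm₁ hm₂
    obtain ⟨s₁, hs₁, hv₁⟩ := h₁ x _ hm₁
    obtain ⟨s₂, hs₂, hv₂⟩ := h₂ x _ hm₂
    simp only [bvals, Set.mem_singleton_iff] at hv₁ hv₂
    subst hv₁ hv₂
    exact hid (hcompat x _ _ hs₁ hs₂)
  · intro x n₁ V₁ n₂ V₂ hm₁ hm₂
    obtain ⟨s₁, hs₁, hv₁⟩ := h₁ x _ hm₁
    obtain ⟨s₂, hs₂, hv₂⟩ := h₂ x _ hm₂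
    obtain ⟨v₁, hv₁V, rfl⟩ := hv₁
    obtain ⟨v₂, hv₂V, he⟩ := hv₂
    have := hcompat x _ _ hs₁ hs₂
    rw [he] at this
    have hp := hvis this
    have h1 : v₁ = v₂ := congrArg Prod.fst hp
    have h2 : n₁ = n₂ := hid (congrArg Prod.snd hp)
    exact ⟨h2, v₁, hv₁V, h1 ▸ hv₂V⟩
end

section
/- If two condensed solution mappings m₁ and m₂ are NOT condensed-compatible, then every pair of flat expansions f₁ ∈ Ξ(m₁), f₂ ∈ Ξ(m₂) fails to be flat-compatible. -/
/-- If two condensed solution mappings that bind every shared variable in the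
same representation component are NOT condensed-compatible, then no pair of
their flat expansions is flat-compatible. -/
theorem not_flatCompat_of_not_condCompat {Var Term V : Type*}
    (idtoval : ℕ → Term) (vis : V × Term → Term) (NG : Set Term)
    (hid : Function.Injective idtoval) (hvis : Function.Injective vis)
    (m₁ m₂ : Var → Option (Binding Term V))
    (hsame : ∀ x b₁ b₂, m₁ x = some b₁ → m₂ x = some b₂ → SameRep b₁ b₂)
    (hnc : ¬ CondCompat m₁ m₂) :
    ∀ f₁ ∈ Xi idtoval vis NG m₁, ∀ f₂ ∈ Xi idtoval vis NG m₂,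
      ¬ FlatCompat f₁ f₂ := by
  intro f₁ hf₁ f₂ hf₂ hfc
  apply hnc
  refine ⟨?_, ?_, ?_⟩
  · intro x t₁ t₂ h₁ h₂
    obtain ⟨s₁, hs₁, hv₁⟩ := hf₁.2 x _ h₁
    obtain ⟨s₂, hs₂, hv₂⟩ := hf₂.2 x _ h₂
    simp only [bvals, Set.mem_singleton_iff] at hv₁ hv₂
    subst hv₁ hv₂
    exact hfc x _ _ hs₁ hs₂
  · intro x n₁ n₂ h₁ h₂
    obtain ⟨s₁, hs₁, hv₁⟩ := hf₁.2 x _ h₁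
    obtain ⟨s₂, hs₂, hv₂⟩ := hf₂.2 x _ h₂
    simp only [bvals, Set.mem_singleton_iff] at hv₁ hv₂
    subst hv₁ hv₂
    exact hid (hfc x _ _ hs₁ hs₂)
  · intro x n₁ V₁ n₂ V₂ h₁ h₂
    obtain ⟨s₁, hs₁, hv₁⟩ := hf₁.2 x _ h₁
    obtain ⟨s₂, hs₂, hv₂⟩ := hf₂.2 x _ h₂
    obtain ⟨v₁, hv₁V, rfl⟩ := hv₁
    obtain ⟨v₂, hv₂V, rfl⟩ := hv₂
    have heq := hvis (hfc x _ _ hs₁ hs₂)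
    have hv : v₁ = v₂ := congrArg Prod.fst heq
    have hn : n₁ = n₂ := hid (congrArg Prod.snd heq)
    exact ⟨hn, v₁, hv₁V, hv ▸ hv₂V⟩
end

section
/- (Merge correspondence) Let m₁ and m₂ be condensed solution mappings such that every shared variable is bound by both in the same representation component, and let f₁ ∈ Ξ(m₁) and f₂ ∈ Ξ(m₂) be flat-compatible flat expansions. Then the flat merge merge_F(f₁, f₂) is a flat expansion of the condensed merge: merge_F(f₁, f₂) ∈ Ξ(merge_C(m₁, m₂)). -/
/-- The flat merge of two flat mappings: the merged mapping takes `f₁`'s binding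
where defined and otherwise `f₂`'s. -/
def mergeF {Var Term : Type*} (f₁ f₂ : Var → Option Term) : Var → Option Term :=
  fun x =>
    match f₁ x with
    | some t => some t
    | none => f₂ x

/-- The condensed merge of two condensed solution mappings: on the ν-, ι- and
ψ-components it takes `m₁`'s binding where defined and otherwise `m₂`'s; on a
variable bound in both ζ-components it keeps `m₁`'s graph-name identifier and
intersects the version sets. -/
def mergeC {Var Term V : Type*} (m₁ m₂ : Var → Option (Binding Term V)) :
    Var → Option (Binding Term V) :=
  fun x =>
    match m₁ x, m₂ x with
    | some (.zeta n₁ V₁), some (.zeta _ V₂) => some (.zeta n₁ (V₁ ∩ V₂))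
    | some b, _ => some b
    | none, b => b

/-- Merge correspondence: if every shared variable of `m₁` and `m₂` is bound in
the same representation component, and `f₁ ∈ Ξ(m₁)` and `f₂ ∈ Ξ(m₂)` are
flat-compatible, then the flat merge of `f₁` and `f₂` is a flat expansion of
the condensed merge of `m₁` and `m₂`. -/
theorem mergeF_mem_Xi_mergeC {Var Term V : Type*}
    (idtoval : ℕ → Term) (vis : V × Term → Term) (NG : Set Term)
    (hid : Function.Injective idtoval) (hvis : Function.Injective vis)
    (m₁ m₂ : Var → Option (Binding Term V))
    (hsame : ∀ x b₁ b₂, m₁ x = some b₁ → m₂ x = some b₂ → SameRep b₁ b₂)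
    (f₁ f₂ : Var → Option Term)
    (hf₁ : f₁ ∈ Xi idtoval vis NG m₁) (hf₂ : f₂ ∈ Xi idtoval vis NG m₂)
    (hcompat : FlatCompat f₁ f₂) :
    mergeF f₁ f₂ ∈ Xi idtoval vis NG (mergeC m₁ m₂) := by
  obtain ⟨h₁n, h₁s⟩ := hf₁
  obtain ⟨h₂n, h₂s⟩ := hf₂
  constructor
  · intro x hx
    unfold mergeC at hx
    split at hx <;> simp_all [mergeF]
  · intro x b hb
    unfold mergeC at hb
    split at hb
    case _ n₁ V₁ n₂ V₂ e₁ e₂ =>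
      -- both zeta
      obtain ⟨t, ht, v₁, hv₁, rfl⟩ := h₁s x _ e₁
      obtain ⟨t', ht', v₂, hv₂, rfl⟩ := h₂s x _ e₂
      have heq := hcompat x _ _ ht ht'
      have hsr := hsame x _ _ e₁ e₂
      have hv : v₁ = v₂ := congrArg Prod.fst (hvis heq)
      have hn : idtoval n₁ = idtoval n₂ := congrArg Prod.snd (hvis heq)
      cases hb
      refine ⟨vis (v₁, idtoval n₁), by simp [mergeF, ht], v₁, ⟨hv₁, hv ▸ hv₂⟩, rfl⟩
    case _ b₁ e₁ hnz =>
      -- m₁ bound (not both-zeta)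
      cases hb
      obtain ⟨t, ht, htv⟩ := h₁s x _ e₁
      rcases e₂ : m₂ x with _ | b₂
      · exact ⟨t, by simp [mergeF, ht], htv⟩
      · obtain ⟨t', ht', htv'⟩ := h₂s x _ e₂
        exact ⟨t, by simp [mergeF, ht], htv⟩
    case _ e₁ =>
      -- m₁ unbound
      obtain ⟨t, ht, htv⟩ := h₂s x _ hb
      exact ⟨t, by simp [mergeF, h₁n x e₁, ht], htv⟩
end

section
/- (Flattening commutes with elementary type downgrade ζ → ι) Let m be a condensed solution mapping and x a variable in the ζ-domain of m with m^ζ(x) = (n, Vs). For each identifier n' in the value translation τ_{ζ→ι}(n, Vs) = {n' | ∃ v ∈ Vs, vis(v, idtoval(n)) = idtoval(n')}, let m_{n'} denote the mapping obtained from m by removing x from the ζ-component and binding x in the ι-component to n'. Then Ξ(m) = ⋃_{n' ∈ τ_{ζ→ι}(n, Vs)} Ξ(m_{n'}). -/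
/-- Flattening commutes with the elementary type downgrade ζ → ι: if `x` is
bound in the ζ-component of `m` to `(n, Vs)`, then the flat expansion of `m`
equals the union, over all identifiers `n'` in the value translation
`τ_{ζ→ι}(n, Vs) = {n' | ∃ v ∈ Vs, vis (v, idtoval n) = idtoval n'}`, of the
flat expansions of the mapping obtained from `m` by instead binding `x` in the
ι-component to `n'`. -/
theorem Xi_eq_iUnion_downgrade_zeta_iota {Var Term V : Type*} [DecidableEq Var]
    (idtoval : ℕ → Term) (vis : V × Term → Term) (NG : Set Term)
    (hid : Function.Bijective idtoval) (hvis : Function.Injective vis)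
    (m : Var → Option (Binding Term V)) (x : Var) (n : ℕ) (Vs : Set V)
    (hx : m x = some (.zeta n Vs)) :
    Xi idtoval vis NG m =
      ⋃ n' ∈ {n' : ℕ | ∃ v ∈ Vs, vis (v, idtoval n) = idtoval n'},
        Xi idtoval vis NG (fun y => if y = x then some (.iota n') else m y) := by
  ext f
  simp only [Set.mem_iUnion, Set.mem_setOf_eq]
  constructor
  · rintro ⟨h1, h2⟩
    obtain ⟨t, hft, ht⟩ := h2 x _ hx
    obtain ⟨v, hv, hvt⟩ := ht
    obtain ⟨n', hn'⟩ := hid.2 t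
    refine ⟨n', ⟨v, hv, by rw [hn', hvt]⟩, ?_, ?_⟩
    · intro y hy
      by_cases hyx : y = x
      · simp [hyx] at hy
      · simp only [if_neg hyx] at hy
        exact h1 y hy
    · intro y b hyb
      by_cases hyx : y = x
      · simp only [if_pos hyx, Option.some.injEq] at hyb
        subst hyx
        exact ⟨t, hft, by rw [← hyb]; exact hn'.symm⟩
      · simp only [if_neg hyx] at hyb
        exact h2 y b hyb
  · rintro ⟨n', ⟨v, hv, hvn⟩, h1, h2⟩
    constructor
    · intro y hy
      by_cases hyx : y = x
      · rw [hyx, hx] at hy; exact absurd hy (by simp)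
      · exact h1 y (by simp [hyx, hy])
    · intro y b hyb
      by_cases hyx : y = x
      · obtain ⟨t, hft, ht⟩ := h2 y (.iota n') (by simp [hyx])
        rw [hyx, hx, Option.some.injEq] at hyb
        subst hyb
        refine ⟨t, hft, v, hv, ?_⟩
        simp only [bvals, Set.mem_singleton_iff] at ht
        rw [ht, ← hvn]
      · exact h2 y b (by simp [hyx, hyb])
end

section
/- (Quad-pattern base case of the evaluation equivalence) Let d_F be a flat dataset, d_C = C(d_F) its condensation, and let ?s, ?p, ?o, ?ag be four distinct variables. Then: (1) for every versioned quad (s, p, o, g, v) ∈ d_F, the flat mapping {?s ↦ s, ?p ↦ p, ?o ↦ o, ?ag ↦ vis(v, g)} is a flat expansion of the condensed mapping m with ι-bindings m^ι(?s) = idtoval⁻¹(s), m^ι(?p) = idtoval⁻¹(p), m^ι(?o) = idtoval⁻¹(o) and ζ-binding m^ζ(?ag) = (idtoval⁻¹(g), d_C(s, p, o, g)), which satisfies d_C(s, p, o, g) ≠ ∅; and (2) conversely, for every condensed mapping m of this form with d_C(s, p, o, g) ≠ ∅, every flat expansion f ∈ Ξ(m) is of the form {?s ↦ s, ?p ↦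 p, ?o ↦ o, ?ag ↦ vis(v, g)} for some version v with (s, p, o, g, v) ∈ d_F. -/
/-- The condensation of a flat dataset: maps each quad `(s, p, o, g)` to the set
of versions in which it is valid. -/
def condenseD {Term V : Type*} (dF : Set (Term × Term × Term × Term × V))
    (s p o g : Term) : Set V :=
  {v | (s, p, o, g, v) ∈ dF}

/-- The condensed solution mapping matching a quad pattern with variables
`?s, ?p, ?o, ?ag`: the subject, predicate and object variables are bound in the
ι-component to the identifiers `ns, np, no`, and the graph variable is bound in
the ζ-component to the graph-name identifier `ng` together with a version
set `Vs`. -/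
def quadCMap {Var Term V : Type*} [DecidableEq Var] (xs xp xo xg : Var)
    (ns np no ng : ℕ) (Vs : Set V) : Var → Option (Binding Term V) :=
  fun y =>
    if y = xs then some (.iota ns)
    else if y = xp then some (.iota np)
    else if y = xo then some (.iota no)
    else if y = xg then some (.zeta ng Vs)
    else none

/-- The flat solution mapping `{?s ↦ s, ?p ↦ p, ?o ↦ o, ?ag ↦ ag}`. -/
def quadFMap {Var Term : Type*} [DecidableEq Var] (xs xp xo xg : Var)
    (s p o ag : Term) : Var → Option Term :=
  fun y =>
    if y = xs then some s
    else if y = xp then some p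
    else if y = xo then some o
    else if y = xg then some ag
    else none

/-- Quad-pattern base case of the evaluation equivalence, for a flat dataset
`dF` (whose graph-name components lie in `NG`), its condensation `condenseD dF`,
and four distinct variables `xs, xp, xo, xg`:
(1) for every versioned quad `(s, p, o, g, v) ∈ dF` and identifiers
`ns, np, no, ng` with `idtoval ns = s`, `idtoval np = p`, `idtoval no = o`,
`idtoval ng = g`, the flat mapping `{?s ↦ s, ?p ↦ p, ?o ↦ o, ?ag ↦ vis (v, g)}`
is a flat expansion of the condensed mapping binding `?s, ?p, ?o` to
`ns, np, no` in the ι-component and `?ag` to `(ng, condenseD dF s p o g)` in the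
ζ-component, and `condenseD dF s p o g` is nonempty;
(2) conversely, for every such condensed mapping with
`condenseD dF s p o g` nonempty, every flat expansion is of the form
`{?s ↦ s, ?p ↦ p, ?o ↦ o, ?ag ↦ vis (v, g)}` for some version `v` with
`(s, p, o, g, v) ∈ dF`. -/
theorem quad_pattern_base {Var Term V : Type*} [DecidableEq Var]
    (idtoval : ℕ → Term) (vis : V × Term → Term) (NG : Set Term)
    (hid : Function.Bijective idtoval) (hvis : Function.Injective vis)
    (dF : Set (Term × Term × Term × Term × V))
    (hNG : ∀ q ∈ dF, q.2.2.2.1 ∈ NG)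
    (xs xp xo xg : Var)
    (hdist : xs ≠ xp ∧ xs ≠ xo ∧ xs ≠ xg ∧ xp ≠ xo ∧ xp ≠ xg ∧ xo ≠ xg) :
    (∀ s p o g : Term, ∀ v : V, (s, p, o, g, v) ∈ dF →
      ∀ ns np no ng : ℕ, idtoval ns = s → idtoval np = p → idtoval no = o →
        idtoval ng = g →
        quadFMap xs xp xo xg s p o (vis (v, g)) ∈
          Xi idtoval vis NG
            (quadCMap xs xp xo xg ns np no ng (condenseD dF s p o g)) ∧
        (condenseD dF s p o g).Nonempty) ∧
    (∀ s p o g : Term, ∀ ns np no ng : ℕ, idtoval ns = s → idtoval np = p →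
      idtoval no = o → idtoval ng = g → (condenseD dF s p o g).Nonempty →
      ∀ f ∈ Xi idtoval vis NG
          (quadCMap xs xp xo xg ns np no ng (condenseD dF s p o g)),
        ∃ v : V, (s, p, o, g, v) ∈ dF ∧
          f = quadFMap xs xp xo xg s p o (vis (v, g))) := by

  obtain ⟨h1, h2, h3, h4, h5, h6⟩ := hdist
  constructor
  · intro s p o g v hq ns np no ng hs hp ho hg
    refine ⟨⟨?_, ?_⟩, ⟨v, hq⟩⟩
    · intro x hx
      simp only [quadCMap] at hx
      simp only [quadFMap]
      split_ifs at hx ⊢ <;> simp_all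
    · intro x b hb
      simp only [quadCMap] at hb
      simp only [quadFMap]
      by_cases e1 : x = xs
      · simp [e1, h1, h2, h3] at hb ⊢
        subst e1; cases hb
        simp [bvals, hs, if_pos rfl]
      by_cases e2 : x = xp
      · subst e2
        simp [Ne.symm h1, h4, h5] at hb ⊢
        cases hb
        simp [bvals, hp]
      by_cases e3 : x = xo
      · subst e3
        simp [Ne.symm h2, Ne.symm h4, h6] at hb ⊢
        cases hb
        simp [bvals, ho]
      by_cases e4 : x = xg
      · subst e4
        simp [Ne.symm h3, Ne.symm h5, Ne.symm h6] at hb ⊢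
        cases hb
        exact ⟨v, hq, by rw [hg]⟩
      · simp [e1, e2, e3, e4] at hb
  · intro s p o g ns np no ng hs hp ho hg hne f hf
    obtain ⟨hnone, hsome⟩ := hf
    have hbs : (quadCMap xs xp xo xg ns np no ng (condenseD dF s p o g) xs :
        Option (Binding Term V)) = some (.iota ns) := by simp [quadCMap]
    have hbp : (quadCMap xs xp xo xg ns np no ng (condenseD dF s p o g) xp :
        Option (Binding Term V)) = some (.iota np) := by
      simp [quadCMap, Ne.symm h1]
    have hbo : (quadCMap xs xp xo xg ns np no ng (condenseD dF s p o g) xo :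
        Option (Binding Term V)) = some (.iota no) := by
      simp [quadCMap, Ne.symm h2, Ne.symm h4]
    have hbg : (quadCMap xs xp xo xg ns np no ng (condenseD dF s p o g) xg :
        Option (Binding Term V)) = some (.zeta ng (condenseD dF s p o g)) := by
      simp [quadCMap, Ne.symm h3, Ne.symm h5, Ne.symm h6]
    obtain ⟨ts, hts, hts'⟩ := hsome xs _ hbs
    obtain ⟨tp, htp, htp'⟩ := hsome xp _ hbp
    obtain ⟨tob, hto, hto'⟩ := hsome xo _ hbo
    obtain ⟨tg, htg, htg'⟩ := hsome xg _ hbg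
    simp only [bvals, Set.mem_singleton_iff] at hts' htp' hto'
    obtain ⟨v, hv, hvg⟩ := htg'
    refine ⟨v, hv, ?_⟩
    funext y
    simp only [quadFMap]
    by_cases e1 : y = xs
    · subst e1; rw [hts, if_pos rfl, hts', hs]
    by_cases e2 : y = xp
    · subst e2; rw [htp, if_neg e1, if_pos rfl, htp', hp]
    by_cases e3 : y = xo
    · subst e3; rw [hto, if_neg e1, if_neg e2, if_pos rfl, hto', ho]
    by_cases e4 : y = xg
    · subst e4
      rw [htg, if_neg e1, if_neg e2, if_neg e3, if_pos rfl, hvg, hg]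
    · rw [if_neg e1, if_neg e2, if_neg e3, if_neg e4]
      apply hnone
      simp [quadCMap, e1, e2, e3, e4]
end

section
/- (Count-aggregation correctness) Let s_C be a condensed solution sequence and s_F a flat solution sequence representing it. Then the length of s_F equals the sum, over the condensed mappings m occurring in s_C (with multiplicity), of the cardinality |Ξ(m)| of their flat expansions; consequently, counting the flat solutions can be computed from the condensed solutions as Σ_{m ∈ s_C} Π_{x ∈ dom(m)} |vals_m(x)|. -/
open Classical in
/-- A flat solution sequence `sF` represents a condensed solution sequence `sC`
if the multiset of flat mappings in `sF` equals the sum over the condensed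
mappings `m` in `sC` (with multiplicity) of the multisets underlying `Ξ(m)`;
equivalently, every flat mapping `f` occurs in `sF` exactly as many times as
there are mappings `m` in `sC` with `f ∈ Ξ(m)`. -/
def Represents {Var Term V : Type*} (idtoval : ℕ → Term) (vis : V × Term → Term)
    (NG : Set Term) (sF : List (Var → Option Term))
    (sC : List (Var → Option (Binding Term V))) : Prop :=
  ∀ f : Var → Option Term,
    (sF : Multiset (Var → Option Term)).count f =
      (sC.map (fun m => if f ∈ Xi idtoval vis NG m then 1 else 0)).sum

/-! Each `Ξ(m)` with `m ∈ sC` lies inside the finite set of entries of `sF`, since its members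
occur in `sF` at least once; summing the multiplicity condition over those entries gives
`|sF| = Σ_m |Ξ(m)|`. Independently, `Ξ(m)` is in bijection with the dependent functions
`Π x ∈ dom(m), vals_m(x)`, whose cardinality is the product `Π_x |vals_m(x)|` once `dom(m)` is
finite. -/

theorem Finset.sum_list_map_sum_comm {α ι M : Type*} [AddCommMonoid M] (s : Finset α)
    (l : List ι) (f : ι → α → M) :
    ∑ a ∈ s, (l.map (f · a)).sum = (l.map fun i => ∑ a ∈ s, f i a).sum := by
  induction l <;> simp [Finset.sum_add_distrib, *]

open Classical in
theorem Multiset.card_eq_sum_ncard_of_count_eq {α ι : Type*} (s : Multiset α) (l : List ι)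
    (X : ι → Set α) (h : ∀ a, s.count a = (l.map fun i => if a ∈ X i then 1 else 0).sum) :
    Multiset.card s = (l.map fun i => (X i).ncard).sum := by
  have hsub : ∀ i ∈ l, X i ⊆ s.toFinset := by
    intro i hi a ha
    rw [Finset.mem_coe, Multiset.mem_toFinset, ← Multiset.count_pos, h]
    have hone : 1 ∈ l.map fun i => if a ∈ X i then 1 else 0 :=
      List.mem_map.mpr ⟨i, hi, if_pos ha⟩
    exact List.le_sum_of_mem hone
  calc Multiset.card s = ∑ a ∈ s.toFinset, s.count a := (Multiset.toFinset_sum_count_eq s).symm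
    _ = ∑ a ∈ s.toFinset, (l.map fun i => if a ∈ X i then 1 else 0).sum :=
      Finset.sum_congr rfl fun a _ => h a
    _ = (l.map fun i => ∑ a ∈ s.toFinset, if a ∈ X i then 1 else 0).sum :=
      Finset.sum_list_map_sum_comm _ _ _
    _ = (l.map fun i => (X i).ncard).sum := by
      refine congrArg List.sum (List.map_congr_left fun i hi => ?_)
      rw [← Finset.card_filter, ← Set.ncard_coe_finset, Finset.coe_filter]
      exact congrArg Set.ncard (Set.inter_eq_right.mpr (hsub i hi))

section

variable {Var Term V : Type*} (idtoval : ℕ → Term) (vis : V × Term → Term) (NG : Set Term)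
  (m : Var → Option (Binding Term V))

theorem exists_mem_valsM_of_mem_Xi {f : Var → Option Term} (hf : f ∈ Xi idtoval vis NG m)
    {x : Var} (hx : x ∈ domM m) : ∃ t ∈ valsM idtoval vis NG m x, f x = some t := by
  obtain ⟨b, hb⟩ := Option.ne_none_iff_exists'.mp hx
  obtain ⟨t, hft, ht⟩ := hf.2 x b hb
  exact ⟨t, by simpa [valsM, hb] using ht, hft⟩

open Classical in
noncomputable def xiEquivPi :
    Xi idtoval vis NG m ≃ ∀ x : domM m, valsM idtoval vis NG m x where
  toFun f x :=
    ⟨(exists_mem_valsM_of_mem_Xi idtoval vis NG m f.2 x.2).choose,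
      (exists_mem_valsM_of_mem_Xi idtoval vis NG m f.2 x.2).choose_spec.1⟩
  invFun g := ⟨fun x => if hx : x ∈ domM m then some (g ⟨x, hx⟩) else none, by
    refine ⟨fun x hx => dif_neg (fun h => h hx), fun x b hb => ?_⟩
    have hx : x ∈ domM m := by simp [domM, hb]
    exact ⟨g ⟨x, hx⟩, dif_pos hx, by simpa [valsM, hb] using (g ⟨x, hx⟩).2⟩⟩
  left_inv f := by
    ext x : 2
    by_cases hx : x ∈ domM m
    · simp only [dif_pos hx]
      exact ((exists_mem_valsM_of_mem_Xi idtoval vis NG m f.2 hx).choose_spec.2).symm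
    · simp only [dif_neg hx]
      exact (f.2.1 x (by simpa [domM] using hx)).symm
  right_inv g := by
    funext x
    ext
    dsimp only
    generalize_proofs h
    simpa [x.2] using h.choose_spec.2.symm

theorem ncard_Xi_eq_finprod (hm : (domM m).Finite) :
    (Xi idtoval vis NG m).ncard = ∏ᶠ x ∈ domM m, (valsM idtoval vis NG m x).ncard := by
  have := hm.fintype
  rw [← Nat.card_coe_set_eq, Nat.card_congr (xiEquivPi idtoval vis NG m), Nat.card_pi,
    ← finprod_eq_prod_of_fintype]
  exact finprod_set_coe_eq_finprod_mem (f := fun x => (valsM idtoval vis NG m x).ncard) _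

end

theorem length_eq_sum_card_Xi_general {Var Term V : Type*}
    (idtoval : ℕ → Term) (vis : V × Term → Term) (NG : Set Term)
    (sF : List (Var → Option Term))
    (sC : List (Var → Option (Binding Term V)))
    (hdom : ∀ m ∈ sC, (domM m).Finite)
    (hrep : Represents idtoval vis NG sF sC) :
    sF.length = (sC.map (fun m => (Xi idtoval vis NG m).ncard)).sum ∧
    sF.length =
      (sC.map (fun m => ∏ᶠ x ∈ domM m, (valsM idtoval vis NG m x).ncard)).sum := by
  have hcard : sF.length = (sC.map (fun m => (Xi idtoval vis NG m).ncard)).sum :=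
    Multiset.card_eq_sum_ncard_of_count_eq (sF : Multiset (Var → Option Term)) sC _ hrep
  refine ⟨hcard, hcard.trans (congrArg List.sum (List.map_congr_left fun m hm => ?_))⟩
  exact ncard_Xi_eq_finprod idtoval vis NG m (hdom m hm)

/-- Count-aggregation correctness: if the flat solution sequence `sF` represents
the condensed solution sequence `sC` (whose mappings have finite domains and
finite value sets), then the length of `sF` equals the sum over the condensed
mappings `m` in `sC` of `|Ξ(m)|`; consequently it equals
`Σ_{m ∈ sC} Π_{x ∈ dom(m)} |vals_m(x)|`. -/
theorem length_eq_sum_card_Xi {Var Term V : Type*}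
    (idtoval : ℕ → Term) (vis : V × Term → Term) (NG : Set Term)
    (hid : Function.Injective idtoval) (hvis : Function.Injective vis)
    (hfin : ∀ b : Binding Term V, (bvals idtoval vis NG b).Finite)
    (sF : List (Var → Option Term))
    (sC : List (Var → Option (Binding Term V)))
    (hdom : ∀ m ∈ sC, (domM m).Finite)
    (hrep : Represents idtoval vis NG sF sC) :
    sF.length = (sC.map (fun m => (Xi idtoval vis NG m).ncard)).sum ∧
    sF.length =
      (sC.map (fun m => ∏ᶠ x ∈ domM m, (valsM idtoval vis NG m x).ncard)).sum :=
  length_eq_sum_card_Xi_general idtoval vis NG sF sC hdom hrep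
end
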